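/- arXiv:1606.05975 — 5 statements merged into one kernel-verified Lean document; each statement's English description precedes it below -/
import Mathlib

section
/- Let ℓ be a positive integer and G a graph. If (A,B) is a cut of G of size ℓ, then there is an ordering σ of V(G) with cw_σ(G) = cw(G) that has at most (2ℓ+1)·(2·cw(G)+3) + 2ℓ many (A,B)-blocks. -/
/-- A finite undirected multigraph without loops. -/
structure Multigraph where
  V : Type
  E : Type
  finV : Finite V
  finE : Finite E
  ends : E → V × V
  loopless : ∀ e, (ends e).1 ≠ (ends e).2

attribute [instance] Multigraph.finV Multigraph.finE

namespace Multigraph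

/-- `δ_G(S)`: the number of edges of `G` with exactly one endpoint in `S`. -/
noncomputable def delta (G : Multigraph) (S : Set G.V) : ℕ :=
  {e : G.E | ¬ ((G.ends e).1 ∈ S ↔ (G.ends e).2 ∈ S)}.ncard

/-- The width `cw_σ(G)` of an ordering, represented as an injective ranking `ρ : V → ℕ`. -/
noncomputable def cwOrd (G : Multigraph) (ρ : G.V → ℕ) : ℕ :=
  sSup {w | ∃ v : G.V, w = G.delta {u | ρ u ≤ ρ v}}

/-- The cutwidth of a multigraph. -/
noncomputable def cutwidth (G : Multigraph) : ℕ :=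
  sInf {w | ∃ ρ : G.V → ℕ, Function.Injective ρ ∧ G.cwOrd ρ = w}

/-- Walks in a multigraph. -/
inductive Walk (G : Multigraph) : G.V → G.V → Type
  | nil (v : G.V) : Walk G v v
  | cons {u v w : G.V} (e : G.E)
      (h : G.ends e = (u, v) ∨ G.ends e = (v, u)) (p : Walk G v w) : Walk G u w

namespace Walk

def edges {G : Multigraph} : ∀ {u v : G.V}, G.Walk u v → List G.E
  | _, _, .nil _ => []
  | _, _, .cons e _ p => e :: p.edges

def support {G : Multigraph} : ∀ {u v : G.V}, G.Walk u v → List G.V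
  | _, _, .nil v => [v]
  | u, _, .cons _ _ p => u :: p.support

end Walk

def Connected (G : Multigraph) : Prop := ∀ u v : G.V, Nonempty (G.Walk u v)

/-- An immersion model of `H` in `G`. -/
structure ImmersionModel (H G : Multigraph) where
  vmap : H.V → G.V
  inj : Function.Injective vmap
  emap : (e : H.E) → G.Walk (vmap (H.ends e).1) (vmap (H.ends e).2)
  isPath : ∀ e, ((emap e).support).Nodup
  edgeDisj : ∀ e e', e ≠ e' → ∀ f, f ∈ (emap e).edges → f ∉ (emap e').edges

/-- `H ≤_i G`. -/
def Immersion (H G : Multigraph) : Prop := Nonempty (ImmersionModel H G)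

/-- A strong immersion model: no internal vertex of a path is a branch vertex. -/
structure StrongImmersionModel (H G : Multigraph) extends ImmersionModel H G where
  strong : ∀ e, ∀ x, x ∈ (emap e).support →
    x ≠ vmap (H.ends e).1 → x ≠ vmap (H.ends e).2 → x ∉ Set.range vmap

/-- `H ≤_si G`. -/
def StrongImmersion (H G : Multigraph) : Prop := Nonempty (StrongImmersionModel H G)

/-- Isomorphism of multigraphs. -/
structure Iso (G H : Multigraph) where
  fv : G.V ≃ H.V
  fe : G.E ≃ H.E
  pres : ∀ e, H.ends (fe e) = (fv (G.ends e).1, fv (G.ends e).2)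
           ∨ H.ends (fe e) = (fv (G.ends e).2, fv (G.ends e).1)

def Isomorphic (G H : Multigraph) : Prop := Nonempty (Iso G H)

/-- The minimal obstruction set of a class `C` with respect to a partial order `le`. -/
def obstructions (le : Multigraph → Multigraph → Prop) (C : Set Multigraph) :
    Set Multigraph :=
  {G | G ∉ C ∧ ∀ G', le G' G → ¬ G'.Isomorphic G → G' ∈ C}

/-- `C_k`: the class of multigraphs of cutwidth at most `k`. -/
def cutwidthClass (k : ℕ) : Set Multigraph := {G | G.cutwidth ≤ k}

/-- The degree of a vertex (each parallel edge counts once at each endpoint). -/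
noncomputable def degree (G : Multigraph) (v : G.V) : ℕ :=
  {e : G.E | (G.ends e).1 = v ∨ (G.ends e).2 = v}.ncard

/-- The number of `A`-blocks of an ordering `ρ`: the number of maximal runs of
consecutive (in `ρ`) vertices belonging to `A`, counted via block-starting vertices. -/
noncomputable def blockCount (G : Multigraph) (ρ : G.V → ℕ) (A : Set G.V) : ℕ :=
  {v : G.V | v ∈ A ∧ ∀ u : G.V, ρ u < ρ v →
      ∃ w : G.V, w ∉ A ∧ ρ u ≤ ρ w ∧ ρ w < ρ v}.ncard

/-- The extension `G*` of a `k`-boundaried graph `(G, x)`. -/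
def extension (G : Multigraph) {k : ℕ} (x : Fin k → G.V) : Multigraph where
  V := G.V ⊕ Fin k
  E := G.E ⊕ Fin k
  finV := inferInstance
  finE := inferInstance
  ends := Sum.elim (fun e => (Sum.inl (G.ends e).1, Sum.inl (G.ends e).2))
                   (fun i => (Sum.inl (x i), Sum.inr i))
  loopless := by
    rintro (e | i)
    · simpa using G.loopless e
    · simp

/-- The join `𝐀 ⊕ 𝐁` of two `k`-boundaried graphs. -/
def join {k : ℕ} (A B : Multigraph) (x : Fin k → A.V) (y : Fin k → B.V) : Multigraph where
  V := A.V ⊕ B.V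
  E := (A.E ⊕ B.E) ⊕ Fin k
  finV := inferInstance
  finE := inferInstance
  ends := Sum.elim
    (Sum.elim (fun e => (Sum.inl (A.ends e).1, Sum.inl (A.ends e).2))
              (fun e => (Sum.inr (B.ends e).1, Sum.inr (B.ends e).2)))
    (fun i => (Sum.inl (x i), Sum.inr (y i)))
  loopless := by
    rintro ((e | e) | i)
    · simpa using A.loopless e
    · simpa using B.loopless e
    · simp

/-- An `ℓ`-bucketing of an ordering `ρ` (buckets indexed 1,…,ℓ). -/
def IsBucketing (G : Multigraph) (ρ : G.V → ℕ) (ℓ : ℕ) (T : G.V → ℕ) : Prop :=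
  (∀ v, 1 ≤ T v ∧ T v ≤ ℓ) ∧ ∀ u v : G.V, ρ u ≤ ρ v → T u ≤ T v

/-- `width(G,σ,T,i)`: the maximum size of a cut in `cuts(G,σ,T,i)`; these cuts
are described by their left side `S`, which contains all buckets before `i`,
a `σ`-downward-closed part of bucket `i`, and nothing else. -/
noncomputable def bucketWidth (G : Multigraph) (ρ : G.V → ℕ) (T : G.V → ℕ) (i : ℕ) : ℕ :=
  sSup {w | ∃ S : Set G.V,
    (∀ v, T v < i → v ∈ S) ∧ (∀ v ∈ S, T v ≤ i) ∧
    (∀ u v : G.V, T u = i → T v = i → ρ u ≤ ρ v → v ∈ S → u ∈ S) ∧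
    w = G.delta S}

/-- A `(k,ℓ)`-bucket interface. -/
structure BucketInterface (k ℓ : ℕ) where
  b : Fin k → ℕ
  b' : Fin k → ℕ
  mu : ℕ → ℕ
  mu' : ℕ → ℕ
  b_mem : ∀ i, b i ∈ Set.Icc 1 ℓ
  b'_mem : ∀ i, b' i ∈ Set.Icc 1 ℓ
  mu_le : ∀ j, mu j ≤ k
  mu'_le : ∀ j, mu' j ≤ k

/-- A `k`-boundaried graph `(G, x)` conforms with a `(k,ℓ)`-bucket interface. -/
def Conforms {k : ℕ} (G : Multigraph) (x : Fin k → G.V) (ℓ : ℕ)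
    (I : BucketInterface k ℓ) : Prop :=
  ∃ ρ : (G.extension x).V → ℕ, Function.Injective ρ ∧
  ∃ T : (G.extension x).V → ℕ, (G.extension x).IsBucketing ρ ℓ T ∧
    (∀ v : G.V, Odd (T (Sum.inl v))) ∧
    (∀ i : Fin k, Even (T (Sum.inr i))) ∧
    (∀ i : Fin k, T (Sum.inl (x i)) = I.b i) ∧
    (∀ i : Fin k, T (Sum.inr i) = I.b' i) ∧
    (∀ j ∈ Set.Icc 1 ℓ,
      G.bucketWidth (fun v => ρ (Sum.inl v)) (fun v => T (Sum.inl v)) j ≤ I.mu j) ∧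
    (∀ j ∈ Set.Icc 1 ℓ, (G.extension x).bucketWidth ρ T j ≤ I.mu' j)

/-- `m` pairwise edge-disjoint paths between the sets `X` and `Y`. -/
def ConnectorBetween (G : Multigraph) (X Y : Set G.V) (m : ℕ) : Prop :=
  ∃ (s t : Fin m → G.V) (P : (i : Fin m) → G.Walk (s i) (t i)),
    (∀ i, s i ∈ X) ∧ (∀ i, t i ∈ Y) ∧ (∀ i, (P i).support.Nodup) ∧
    ∀ i j, i ≠ j → ∀ f, f ∈ (P i).edges → f ∉ (P j).edges

/-- A linked ordering. -/
def Linked (G : Multigraph) (ρ : G.V → ℕ) : Prop :=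
  ∀ u u' : G.V, ρ u ≤ ρ u' →
    G.ConnectorBetween {z | ρ z ≤ ρ u} {z | ¬ ρ z ≤ ρ u'}
      (sInf {w | ∃ v : G.V, ρ u ≤ ρ v ∧ ρ v ≤ ρ u' ∧ w = G.delta {z | ρ z ≤ ρ v}})

/-- The multigraph obtained by deleting a set of edges. -/
def deleteEdges (G : Multigraph) (F : Set G.E) : Multigraph where
  V := G.V
  E := {e : G.E // e ∉ F}
  finV := G.finV
  finE := inferInstance
  ends e := G.ends e.1
  loopless e := G.loopless e.1

/-- `dcw_k(G)`: minimum number of edges to delete to reach cutwidth at most `k`. -/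
noncomputable def dcw (k : ℕ) (G : Multigraph) : ℕ :=
  sInf {w | ∃ F : Set G.E, (G.deleteEdges F).cutwidth ≤ k ∧ F.ncard = w}

/-- The class `C_{w,k}`. -/
def dcwClass (w k : ℕ) : Set Multigraph := {G | dcw k G ≤ w}

/-- Induced subgraph `G[X]`. -/
def induce (G : Multigraph) (X : Set G.V) : Multigraph where
  V := X
  E := {e : G.E // (G.ends e).1 ∈ X ∧ (G.ends e).2 ∈ X}
  finV := inferInstance
  finE := inferInstance
  ends e := (⟨(G.ends e.1).1, e.2.1⟩, ⟨(G.ends e.1).2, e.2.2⟩)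
  loopless := by
    intro e h
    exact G.loopless e.1 (Subtype.ext_iff.mp h)

/-- A graph is `ℋ`-immersion-free if it contains no member of `ℋ` as an immersion. -/
def ImmersionFree (H : Set Multigraph) (G : Multigraph) : Prop :=
  ∀ X ∈ H, ¬ Immersion X G

/-- `aic_ℋ(G)`: minimum number of edge deletions to reach an `ℋ`-immersion-free graph. -/
noncomputable def aic (H : Set Multigraph) (G : Multigraph) : ℕ :=
  sInf {w | ∃ F : Set G.E, ImmersionFree H (G.deleteEdges F) ∧ F.ncard = w}

/-- The class `C_{w,ℋ}`. -/
def aicClass (w : ℕ) (H : Set Multigraph) : Set Multigraph := {G | aic H G ≤ w}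

/-- `ℋ` is a `≤_i`-antichain. -/
def IsAntichainImm (H : Set Multigraph) : Prop :=
  ∀ G₁ ∈ H, ∀ G₂ ∈ H, Immersion G₁ G₂ → Isomorphic G₁ G₂

/-- Disjoint union of two multigraphs. -/
def disjUnion (G H : Multigraph) : Multigraph where
  V := G.V ⊕ H.V
  E := G.E ⊕ H.E
  finV := inferInstance
  finE := inferInstance
  ends := Sum.elim (fun e => (Sum.inl (G.ends e).1, Sum.inl (G.ends e).2))
                   (fun e => (Sum.inr (H.ends e).1, Sum.inr (H.ends e).2))
  loopless := by
    rintro (e | e)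
    · simpa using G.loopless e
    · simpa using H.loopless e

/-- Disjoint union of a finite family of multigraphs. -/
def sigmaUnion {m : ℕ} (Gs : Fin m → Multigraph) : Multigraph where
  V := Σ i, (Gs i).V
  E := Σ i, (Gs i).E
  finV := inferInstance
  finE := inferInstance
  ends e := (⟨e.1, ((Gs e.1).ends e.2).1⟩, ⟨e.1, ((Gs e.1).ends e.2).2⟩)
  loopless := by
    intro e h
    exact (Gs e.1).loopless e.2 (by simpa using h)

/-- `cw_σ(G,X) = δ_G(X) + cw_{σ_X}(G[X])`. -/
noncomputable def cwRel (G : Multigraph) (ρ : G.V → ℕ) (X : Set G.V) : ℕ :=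
  G.delta X + (G.induce X).cwOrd (fun v => ρ v.val)

/-- Membership in the family of prefixes relevant to `X`-linkedness: the complement
of `X` (the prefix right before `X` starts) and the prefixes ending inside `X`. -/
def IsXPrefix (G : Multigraph) (ρ : G.V → ℕ) (X : Set G.V) (P : Set G.V) : Prop :=
  P = Xᶜ ∨ ∃ v ∈ X, P = {z | ρ z ≤ ρ v}

/-- An `X`-linked ordering. -/
def XLinked (G : Multigraph) (ρ : G.V → ℕ) (X : Set G.V) : Prop :=
  (∀ u v : G.V, u ∉ X → v ∈ X → ρ u < ρ v) ∧
  ∀ P P' : Set G.V, G.IsXPrefix ρ X P → G.IsXPrefix ρ X P' → P ⊆ P' →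
    G.ConnectorBetween P P'ᶜ
      (sInf {w | ∃ Q : Set G.V, G.IsXPrefix ρ X Q ∧ P ⊆ Q ∧ Q ⊆ P' ∧ w = G.delta Q})

end Multigraph

/-!
Among the orderings of width `cw(G)` cut into nonempty blocks of consecutive vertices on one side
of `(A, B)`, take one with the fewest blocks. Each block contains at most one start of an
`(A,B)`-block, and consecutive blocks lie on opposite sides, since otherwise they could be merged.
Call a block clean if it contains no end of a cut edge; at most `2ℓ` blocks are not clean. If a
clean block `X` is followed by `Y`, no edge joins them, so `δ` is modular on `X` and `Y`; if the
prefix ending with `X` were a weak local maximum of the prefix cut sizes, exchanging `X` and `Y`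
would keep the width and bring a block next to one of its own side, which could then be merged.
Along a run of clean blocks the prefix cut sizes, all in `[0, cw(G)]`, therefore first decrease
and then increase strictly, so any `2·cw(G) + 3` consecutive blocks contain one that is not clean.
-/

theorem add_le_of_no_weak_local_max_of_le {d : ℕ → ℕ} {n : ℕ}
    (h : ∀ t < n, d (t + 1) < d t ∨ d (t + 1) < d (t + 2)) (h₀ : d 0 ≤ d 1) :
    d 1 + n ≤ d (n + 1) := by
  suffices ∀ t ≤ n, d t ≤ d (t + 1) ∧ d 1 + t ≤ d (t + 1) from (this n le_rfl).2
  intro t ht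
  induction t with
  | zero => exact ⟨h₀, le_rfl⟩
  | succ t ih =>
    obtain ⟨h₁, h₂⟩ := ih (by omega)
    have : d (t + 1) < d t ∨ d (t + 1) < d (t + 1 + 1) := h t (by omega)
    omega

theorem le_add_of_no_weak_local_max {k : ℕ} :
    ∀ {n : ℕ} {d : ℕ → ℕ}, (∀ t, d t ≤ k) →
      (∀ t < n, d (t + 1) < d t ∨ d (t + 1) < d (t + 2)) → n ≤ d 0 + k
  | 0, _, _, _ => Nat.zero_le _
  | n + 1, d, hd, h => by
    rcases lt_or_ge (d 1) (d 0) with h₀ | h₀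
    · have : n ≤ d 1 + k := le_add_of_no_weak_local_max (d := fun t => d (t + 1))
        (fun t => hd _) (fun t ht => h (t + 1) (by omega))
      omega
    · have := add_le_of_no_weak_local_max_of_le h h₀
      have := hd (n + 1 + 1)
      omega

theorem lt_mul_of_forall_exists_mem_window {D : Set ℕ} {r : ℕ} (n : ℕ)
    (h : ∀ s, s + r ≤ n → ∃ i ∈ D, s ≤ i ∧ i < s + r) :
    n < ((D ∩ Set.Iio n).ncard + 1) * r := by
  induction n using Nat.strong_induction_on with
  | _ n ih =>
  rcases lt_or_ge n r with hn | hn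
  · exact hn.trans_le (Nat.le_mul_of_pos_left r (Nat.succ_pos _))
  obtain ⟨i, hiD, hi₁, hi₂⟩ := h (n - r) (by omega)
  have hi := ih i (by omega) fun s hs => h s (by omega)
  have hcard : (D ∩ Set.Iio i).ncard < (D ∩ Set.Iio n).ncard := by
    refine Set.ncard_lt_ncard ?_ ((Set.finite_Iio n).inter_of_right D)
    exact ⟨Set.inter_subset_inter_right D (Set.Iio_subset_Iio (by omega)),
      fun hsub => lt_irrefl i (hsub ⟨hiD, show i < n by omega⟩).2⟩
  have hn' : n ≤ i + r := by omega
  have : ((D ∩ Set.Iio i).ncard + 1 + 1) * r ≤ ((D ∩ Set.Iio n).ncard + 1) * r :=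
    Nat.mul_le_mul_right r (by omega)
  linarith

namespace List

variable {α : Type*}

theorem prefix_append_iff {p l₁ l₂ : List α} :
    p <+: l₁ ++ l₂ ↔ p <+: l₁ ∨ ∃ q, q <+: l₂ ∧ p = l₁ ++ q := by
  constructor
  · rintro ⟨t, ht⟩
    rcases append_eq_append_iff.1 ht with ⟨a, rfl, -⟩ | ⟨c, rfl, -⟩
    · exact Or.inl (prefix_append _ _)
    · exact Or.inr ⟨c, ⟨t, by simp_all⟩, rfl⟩
  · rintro (h | ⟨q, hq, rfl⟩)
    · exact prefix_append_of_prefix h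
    · exact (prefix_append_right_inj l₁).2 hq

theorem setOf_mem_append_singleton_eq {β : Type*} [LinearOrder β] {f : α → β}
    {L p : List α} {v : α} (hL : L.Pairwise (f · < f ·)) (hmem : ∀ u, u ∈ L)
    (hp : p ++ [v] <+: L) : {u | u ∈ p ++ [v]} = {u | f u ≤ f v} := by
  obtain ⟨q, rfl⟩ := hp
  simp only [append_assoc, singleton_append, pairwise_append,
    pairwise_cons, mem_cons] at hL
  ext u
  simp only [Set.mem_ofPred_eq, mem_append, mem_singleton]
  rcases mem_append.1 (hmem u) with hu | hu
  · simp only [mem_append, mem_singleton] at hu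
    rcases hu with hu | rfl
    · exact iff_of_true (Or.inl hu) (hL.2.2 u hu v (Or.inl rfl)).le
    · exact iff_of_true (Or.inr rfl) le_rfl
  · exact iff_of_false (fun h => by
      rcases h with h | rfl
      · exact (hL.2.2 u h u (Or.inr hu)).false
      · exact (hL.2.1.1 u hu).false) (not_le.2 (hL.2.1.1 u hu))

theorem idxOf_injective [DecidableEq α] {L : List α} (h : ∀ v, v ∈ L) :
    Function.Injective (L.idxOf ·) :=
  fun u _ huv => (idxOf_inj (h u)).1 huv

def IsMonochromatic (A : Set α) (X : List α) : Prop := ∀ u ∈ X, ∀ v ∈ X, (u ∈ A ↔ v ∈ A)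

theorem IsMonochromatic.compl {A : Set α} {X : List α} (h : X.IsMonochromatic A) :
    X.IsMonochromatic Aᶜ :=
  fun u hu v hv => not_congr (h u hu v hv)

theorem IsMonochromatic.append {A : Set α} {X Y : List α} (hX : X.IsMonochromatic A)
    (hY : Y.IsMonochromatic A) {x y : α} (hx : x ∈ X) (hy : y ∈ Y) (hxy : x ∈ A ↔ y ∈ A) :
    (X ++ Y).IsMonochromatic A := by
  have key : ∀ w ∈ X ++ Y, (w ∈ A ↔ x ∈ A) := by
    intro w hw
    rcases mem_append.1 hw with hw | hw
    · exact hX w hw x hx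
    · exact (hY w hw y hy).trans hxy.symm
  exact fun u hu v hv => (key u hu).trans (key v hv).symm

theorem flatten_take_prefix (B : List (List α)) (i : ℕ) : (B.take i).flatten <+: B.flatten :=
  ⟨(B.drop i).flatten, by rw [← flatten_append, take_append_drop]⟩

section blockIndex

variable [DecidableEq α] {B : List (List α)} {v : α}

def blockIndex (B : List (List α)) (v : α) : ℕ := B.findIdx (v ∈ ·)

theorem blockIndex_lt_length (hv : v ∈ B.flatten) : B.blockIndex v < B.length :=
  findIdx_lt_length_of_exists (by simpa using mem_flatten.1 hv)

theorem mem_getElem_of_blockIndex_eq {i : ℕ} (hv : v ∈ B.flatten) (h : B.blockIndex v = i) :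
    ∃ hi : i < B.length, v ∈ B[i] := by
  subst h
  exact ⟨blockIndex_lt_length hv,
    of_decide_eq_true (findIdx_getElem (w := blockIndex_lt_length hv))⟩

theorem blockIndex_eq_of_mem (hB : B.flatten.Nodup) {i : ℕ} (hi : i < B.length)
    (hv : v ∈ B[i]) : B.blockIndex v = i := by
  have hflat : v ∈ B.flatten := mem_flatten.2 ⟨_, getElem_mem hi, hv⟩
  obtain ⟨hj, hvj⟩ := mem_getElem_of_blockIndex_eq hflat rfl
  rcases lt_trichotomy (B.blockIndex v) i with hlt | heq | hlt
  · exact absurd hv (pairwise_iff_getElem.1 (nodup_flatten.1 hB).2 _ _ hj hi hlt hvj)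
  · exact heq
  · have := not_of_lt_findIdx hlt
    simp_all [blockIndex]

theorem mem_flatten_take_iff (hB : B.flatten.Nodup) (hv : v ∈ B.flatten) (i : ℕ) :
    v ∈ (B.take i).flatten ↔ B.blockIndex v < i := by
  constructor
  · intro h
    obtain ⟨X, hX, hvX⟩ := mem_flatten.1 h
    obtain ⟨j, hj, rfl⟩ := mem_take_iff_getElem.1 hX
    rw [blockIndex_eq_of_mem hB (by omega) hvX]
    omega
  · intro h
    obtain ⟨hj, hvj⟩ := mem_getElem_of_blockIndex_eq hv rfl
    exact mem_flatten.2 ⟨_, mem_take_iff_getElem.2 ⟨_, by omega, rfl⟩, hvj⟩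

theorem idxOf_lt_length_flatten_take_iff (hB : B.flatten.Nodup) (hv : v ∈ B.flatten) (i : ℕ) :
    B.flatten.idxOf v < (B.take i).flatten.length ↔ B.blockIndex v < i := by
  rw [← (flatten_take_prefix B i).mem_iff_idxOf_lt_length, mem_flatten_take_iff hB hv]

theorem blockIndex_le_of_idxOf_le (hB : B.flatten.Nodup) {u w : α} (hu : u ∈ B.flatten)
    (hw : w ∈ B.flatten) (h : B.flatten.idxOf u ≤ B.flatten.idxOf w) :
    B.blockIndex u ≤ B.blockIndex w := by
  by_contra hlt
  have h₁ := (idxOf_lt_length_flatten_take_iff hB hw (B.blockIndex w + 1)).2 (by omega)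
  have h₂ := (idxOf_lt_length_flatten_take_iff hB hu (B.blockIndex w + 1)).not.2 (by omega)
  omega

theorem IsMonochromatic.iff_of_blockIndex_eq {A : Set α} (hA : ∀ X ∈ B, X.IsMonochromatic A)
    {u : α} (hu : u ∈ B.flatten) (hv : v ∈ B.flatten) (h : B.blockIndex u = B.blockIndex v) :
    u ∈ A ↔ v ∈ A := by
  obtain ⟨hi, hui⟩ := mem_getElem_of_blockIndex_eq hu h
  obtain ⟨_, hvi⟩ := mem_getElem_of_blockIndex_eq hv rfl
  exact hA _ (getElem_mem hi) u hui v hvi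

end blockIndex

end List

namespace Multigraph

variable {G : Multigraph} {A : Set G.V} {k : ℕ} {B : List (List G.V)}

def cutEdges (G : Multigraph) (S : Set G.V) : Set G.E :=
  {e | ¬((G.ends e).1 ∈ S ↔ (G.ends e).2 ∈ S)}

def cutEnds (G : Multigraph) (S : Set G.V) : Set G.V :=
  (fun e => (G.ends e).1) '' G.cutEdges S ∪ (fun e => (G.ends e).2) '' G.cutEdges S

theorem ncard_cutEnds_le (S : Set G.V) : (G.cutEnds S).ncard ≤ 2 * G.delta S :=
  calc (G.cutEnds S).ncard
      ≤ ((fun e => (G.ends e).1) '' G.cutEdges S).ncard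
        + ((fun e => (G.ends e).2) '' G.cutEdges S).ncard := Set.ncard_union_le _ _
    _ ≤ (G.cutEdges S).ncard + (G.cutEdges S).ncard :=
        add_le_add (Set.ncard_image_le (Set.toFinite _)) (Set.ncard_image_le (Set.toFinite _))
    _ = 2 * G.delta S := (two_mul _).symm

theorem delta_union_union_add_delta {P X Y : Set G.V}
    (h : ∀ e, ((G.ends e).1 ∉ X ∧ (G.ends e).2 ∉ X) ∨ ((G.ends e).1 ∉ Y ∧ (G.ends e).2 ∉ Y)) :
    G.delta (P ∪ X ∪ Y) + G.delta P = G.delta (P ∪ X) + G.delta (P ∪ Y) := by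
  have key : ∀ Q R S T : Set G.E, Q ∪ R = S ∪ T → Q ∩ R = S ∩ T →
      Q.ncard + R.ncard = S.ncard + T.ncard := by
    intro Q R S T h₁ h₂
    rw [← Set.ncard_union_add_ncard_inter Q, ← Set.ncard_union_add_ncard_inter S, h₁, h₂]
  refine key _ _ _ _ ?_ ?_ <;> ext e <;> rcases h e with ⟨h₁, h₂⟩ | ⟨h₁, h₂⟩ <;>
    simp [h₁, h₂] <;> tauto

theorem delta_le_cwOrd (ρ : G.V → ℕ) (v : G.V) : G.delta {u | ρ u ≤ ρ v} ≤ G.cwOrd ρ :=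
  le_csSup ((Set.finite_range fun v => G.delta {u | ρ u ≤ ρ v}).subset
    (by rintro _ ⟨v, rfl⟩; exact ⟨v, rfl⟩)).bddAbove ⟨v, rfl⟩

theorem cwOrd_le {ρ : G.V → ℕ} (h : ∀ v, G.delta {u | ρ u ≤ ρ v} ≤ k) :
    G.cwOrd ρ ≤ k :=
  csSup_le' (by rintro _ ⟨v, rfl⟩; exact h v)

theorem cutwidth_le_cwOrd {ρ : G.V → ℕ} (hρ : Function.Injective ρ) :
    G.cutwidth ≤ G.cwOrd ρ :=
  Nat.sInf_le ⟨ρ, hρ, rfl⟩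

theorem exists_cwOrd_eq_cutwidth (G : Multigraph) :
    ∃ ρ : G.V → ℕ, Function.Injective ρ ∧ G.cwOrd ρ = G.cutwidth := by
  obtain ⟨n, ⟨e⟩⟩ := Finite.exists_equiv_fin G.V
  have : {w | ∃ ρ : G.V → ℕ, Function.Injective ρ ∧ G.cwOrd ρ = w}.Nonempty :=
    ⟨_, fun v => e v, Fin.val_injective.comp e.injective, rfl⟩
  exact Nat.sInf_mem this

theorem cwOrd_idxOf_le [DecidableEq G.V] {L : List G.V} (hL : ∀ v, v ∈ L)
    (h : ∀ p, p <+: L → G.delta {v | v ∈ p} ≤ k) : G.cwOrd (L.idxOf ·) ≤ k :=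
  cwOrd_le fun v => by
    have : {u | L.idxOf u ≤ L.idxOf v} = {u | u ∈ L.take (L.idxOf v + 1)} := by
      ext u
      simp [List.mem_take_iff_idxOf_lt (hL u)]
    rw [this]
    exact h _ (List.take_prefix _ _)

theorem exists_list_prefix_delta_le_cutwidth (G : Multigraph) :
    ∃ L : List G.V, L.Nodup ∧ (∀ v, v ∈ L) ∧
      ∀ p, p <+: L → G.delta {v | v ∈ p} ≤ G.cutwidth := by
  obtain ⟨ρ, hρ, hcw⟩ := G.exists_cwOrd_eq_cutwidth
  obtain ⟨l, hl, hmem⟩ := Finite.exists_univ_list G.V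
  set L := l.mergeSort (fun a b => ρ a ≤ ρ b)
  have hnodup : L.Nodup := (List.mergeSort_perm l _).nodup_iff.2 hl
  have hsorted : L.Pairwise (ρ · < ρ ·) :=
    ((List.pairwise_mergeSort
      (fun a b c hab hbc => by simp only [decide_eq_true_eq] at *; omega)
      (fun a b => by simp only [Bool.or_eq_true, decide_eq_true_eq]; omega) l).and hnodup).imp
        fun ⟨hle, hne⟩ => lt_of_le_of_ne (of_decide_eq_true hle) (hρ.ne hne)
  have hL : ∀ v, v ∈ L := fun v => List.mem_mergeSort.2 (hmem v)
  refine ⟨L, hnodup, hL, fun p hp => ?_⟩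
  rcases List.eq_nil_or_concat' p with rfl | ⟨p, v, rfl⟩
  · simp [delta]
  · rw [List.setOf_mem_append_singleton_eq hsorted hL hp, ← hcw]
    exact delta_le_cwOrd ρ v

structure IsBlockOrdering (G : Multigraph) (A : Set G.V) (k : ℕ) (B : List (List G.V)) :
    Prop where
  nodup : B.flatten.Nodup
  mem_flatten : ∀ v, v ∈ B.flatten
  ne_nil : ∀ X ∈ B, X ≠ []
  isMonochromatic : ∀ X ∈ B, X.IsMonochromatic A
  prefix_delta_le : ∀ p, p <+: B.flatten → G.delta {v | v ∈ p} ≤ k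

theorem isBlockOrdering_map_singleton {L : List G.V} (hnd : L.Nodup) (hmem : ∀ v, v ∈ L)
    (h : ∀ p, p <+: L → G.delta {v | v ∈ p} ≤ k) :
    G.IsBlockOrdering A k (L.map ([·])) := by
  have hflat : (L.map ([·])).flatten = L := by
    rw [← List.flatMap_def, List.flatMap_singleton']
  refine ⟨hflat.symm ▸ hnd, hflat.symm ▸ hmem, ?_, ?_, hflat.symm ▸ h⟩
  · simp
  · simp [List.IsMonochromatic]

theorem IsBlockOrdering.cwOrd_eq_cutwidth [DecidableEq G.V]
    (hB : G.IsBlockOrdering A G.cutwidth B) : G.cwOrd (B.flatten.idxOf ·) = G.cutwidth :=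
  le_antisymm (cwOrd_idxOf_le hB.mem_flatten hB.prefix_delta_le)
    (cutwidth_le_cwOrd (List.idxOf_injective hB.mem_flatten))

theorem IsBlockOrdering.merge {B₁ B₂ : List (List G.V)} {X Y : List G.V}
    (hB : G.IsBlockOrdering A k (B₁ ++ X :: Y :: B₂)) (h : (X ++ Y).IsMonochromatic A) :
    G.IsBlockOrdering A k (B₁ ++ (X ++ Y) :: B₂) := by
  have hflat : (B₁ ++ (X ++ Y) :: B₂).flatten = (B₁ ++ X :: Y :: B₂).flatten := by simp
  refine ⟨hflat ▸ hB.nodup, hflat ▸ hB.mem_flatten, ?_, ?_, hflat ▸ hB.prefix_delta_le⟩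
  · simp only [List.mem_append, List.mem_cons]
    rintro Z (hZ | rfl | hZ)
    · exact hB.ne_nil Z (by simp [hZ])
    · exact fun h => hB.ne_nil X (by simp) (List.append_eq_nil_iff.1 h).1
    · exact hB.ne_nil Z (by simp [hZ])
  · simp only [List.mem_append, List.mem_cons]
    rintro Z (hZ | rfl | hZ)
    · exact hB.isMonochromatic Z (by simp [hZ])
    · exact h
    · exact hB.isMonochromatic Z (by simp [hZ])

theorem delta_append_append_add_delta {P X Y : List G.V}
    (h : ∀ e, ((G.ends e).1 ∉ X ∧ (G.ends e).2 ∉ X) ∨ ((G.ends e).1 ∉ Y ∧ (G.ends e).2 ∉ Y)) :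
    G.delta {v | v ∈ P ++ (X ++ Y)} + G.delta {v | v ∈ P} =
      G.delta {v | v ∈ P ++ X} + G.delta {v | v ∈ P ++ Y} := by
  simp only [List.mem_append, Set.ofPred_or, ← Set.union_assoc]
  exact delta_union_union_add_delta h

/-- `δ` is modular on `X` and `Y`, so for prefixes `Y'` of `Y` and `X'` of `X` the new prefix
`P ++ Y'` cuts at most as much as the old `P ++ X ++ Y'` (by `h₀`), and `P ++ Y ++ X'` at most as
much as `P ++ X'` (by `h₂`). -/
theorem prefix_delta_le_swap {P X Y S : List G.V}
    (hk : ∀ p, p <+: P ++ (X ++ (Y ++ S)) → G.delta {v | v ∈ p} ≤ k)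
    (hXY : ∀ e, ((G.ends e).1 ∉ X ∧ (G.ends e).2 ∉ X) ∨ ((G.ends e).1 ∉ Y ∧ (G.ends e).2 ∉ Y))
    (h₀ : G.delta {v | v ∈ P} ≤ G.delta {v | v ∈ P ++ X})
    (h₂ : G.delta {v | v ∈ P ++ (X ++ Y)} ≤ G.delta {v | v ∈ P ++ X}) :
    ∀ p, p <+: P ++ (Y ++ (X ++ S)) → G.delta {v | v ∈ p} ≤ k := by
  have hmod := delta_append_append_add_delta (P := P) hXY
  intro p hp
  rcases List.prefix_append_iff.1 hp with hp | ⟨q, hq, rfl⟩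
  · exact hk p (List.prefix_append_of_prefix hp)
  rcases List.prefix_append_iff.1 hq with hq | ⟨r, hr, rfl⟩
  · have := delta_append_append_add_delta (P := P) (X := X) (Y := q) fun e =>
      (hXY e).imp_right fun h => ⟨fun h' => h.1 (hq.subset h'), fun h' => h.2 (hq.subset h')⟩
    have := hk (P ++ (X ++ q)) (by simpa using hq.trans (List.prefix_append _ _))
    omega
  rcases List.prefix_append_iff.1 hr with hr | ⟨s, hs, rfl⟩
  · have := delta_append_append_add_delta (P := P) (X := r) (Y := Y) fun e =>
      (hXY e).imp_left fun h => ⟨fun h' => h.1 (hr.subset h'), fun h' => h.2 (hr.subset h')⟩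
    have := hk (P ++ r) (List.prefix_append_right_inj P |>.2 (List.prefix_append_of_prefix hr))
    have hset : {v | v ∈ P ++ (Y ++ r)} = {v | v ∈ P ++ (r ++ Y)} := by
      ext v; simp only [Set.mem_ofPred_eq, List.mem_append]; tauto
    rw [hset]
    omega
  · have hset : {v | v ∈ P ++ (Y ++ (X ++ s))} = {v | v ∈ P ++ (X ++ (Y ++ s))} := by
      ext v; simp only [Set.mem_ofPred_eq, List.mem_append]; tauto
    rw [hset]
    exact hk _ (by simp [hs])

theorem edge_misses_of_opposite {X Y : List G.V} (hX : ∀ v ∈ X, v ∉ G.cutEnds A)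
    (hXY : ∀ x ∈ X, ∀ y ∈ Y, (x ∈ A ↔ y ∉ A)) (e : G.E) :
    ((G.ends e).1 ∉ X ∧ (G.ends e).2 ∉ X) ∨ ((G.ends e).1 ∉ Y ∧ (G.ends e).2 ∉ Y) := by
  by_cases he : e ∈ G.cutEdges A
  · exact Or.inl ⟨fun h => hX _ h (Or.inl ⟨e, he, rfl⟩), fun h => hX _ h (Or.inr ⟨e, he, rfl⟩)⟩
  have he : (G.ends e).1 ∈ A ↔ (G.ends e).2 ∈ A := not_not.1 he
  refine or_iff_not_imp_left.2 fun hmeet => ?_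
  obtain ⟨x, hx, hx₁, hx₂⟩ :
      ∃ x ∈ X, (x ∈ A ↔ (G.ends e).1 ∈ A) ∧ (x ∈ A ↔ (G.ends e).2 ∈ A) := by
    by_cases h₁ : (G.ends e).1 ∈ X
    · exact ⟨_, h₁, Iff.rfl, he⟩
    · exact ⟨(G.ends e).2, by tauto, he.symm, Iff.rfl⟩
  exact ⟨fun hy => by have := hXY x hx _ hy; tauto, fun hy => by have := hXY x hx _ hy; tauto⟩

theorem IsBlockOrdering.swap {B₁ B₂ : List (List G.V)} {X Y : List G.V}
    (hB : G.IsBlockOrdering A k (B₁ ++ X :: Y :: B₂))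
    (hXY : ∀ e, ((G.ends e).1 ∉ X ∧ (G.ends e).2 ∉ X) ∨ ((G.ends e).1 ∉ Y ∧ (G.ends e).2 ∉ Y))
    (h₀ : G.delta {v | v ∈ B₁.flatten} ≤ G.delta {v | v ∈ B₁.flatten ++ X})
    (h₂ : G.delta {v | v ∈ B₁.flatten ++ X ++ Y} ≤ G.delta {v | v ∈ B₁.flatten ++ X}) :
    G.IsBlockOrdering A k (B₁ ++ Y :: X :: B₂) := by
  have hperm : (B₁ ++ X :: Y :: B₂).flatten.Perm (B₁ ++ Y :: X :: B₂).flatten :=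
    ((List.Perm.swap Y X B₂).append_left B₁).flatten
  have hmem : ∀ Z, Z ∈ B₁ ++ Y :: X :: B₂ → Z ∈ B₁ ++ X :: Y :: B₂ := by
    intro Z hZ; simp only [List.mem_append, List.mem_cons] at hZ ⊢; tauto
  refine ⟨hperm.nodup_iff.1 hB.nodup, fun v => hperm.subset (hB.mem_flatten v),
    fun Z hZ => hB.ne_nil Z (hmem Z hZ), fun Z hZ => hB.isMonochromatic Z (hmem Z hZ), ?_⟩
  have hk := hB.prefix_delta_le
  simp only [List.flatten_append, List.flatten_cons, List.append_assoc] at hk h₂ ⊢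
  exact prefix_delta_le_swap hk hXY h₀ h₂

def blockStarts (G : Multigraph) (ρ : G.V → ℕ) (C : Set G.V) : Set G.V :=
  {v | v ∈ C ∧ ∀ u : G.V, ρ u < ρ v → ∃ w : G.V, w ∉ C ∧ ρ u ≤ ρ w ∧ ρ w < ρ v}

theorem not_idxOf_lt_of_mem_blockStarts [DecidableEq G.V] (hnd : B.flatten.Nodup)
    (hmem : ∀ v, v ∈ B.flatten)
    {C : Set G.V} (hC : ∀ X ∈ B, X.IsMonochromatic C) {v v' : G.V}
    (hv' : v' ∈ G.blockStarts (B.flatten.idxOf ·) C) (hβ : B.blockIndex v = B.blockIndex v') :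
    ¬ B.flatten.idxOf v < B.flatten.idxOf v' := by
  intro hlt
  obtain ⟨w, hwC, h₁, h₂⟩ := hv'.2 v hlt
  have hβw : B.blockIndex w = B.blockIndex v' :=
    le_antisymm (List.blockIndex_le_of_idxOf_le hnd (hmem w) (hmem v') h₂.le)
      (hβ ▸ List.blockIndex_le_of_idxOf_le hnd (hmem v) (hmem w) h₁)
  exact hwC ((List.IsMonochromatic.iff_of_blockIndex_eq hC (hmem w) (hmem v') hβw).2 hv'.1)

theorem blockCount_add_blockCount_compl_le [DecidableEq G.V] (hnd : B.flatten.Nodup)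
    (hmem : ∀ v, v ∈ B.flatten) (hA : ∀ X ∈ B, X.IsMonochromatic A) :
    G.blockCount (B.flatten.idxOf ·) A + G.blockCount (B.flatten.idxOf ·) Aᶜ ≤ B.length := by
  set S := G.blockStarts (B.flatten.idxOf ·) A ∪ G.blockStarts (B.flatten.idxOf ·) Aᶜ
  have hstart : ∀ {v v'}, v' ∈ S → B.blockIndex v = B.blockIndex v' →
      ¬ B.flatten.idxOf v < B.flatten.idxOf v' := by
    rintro v v' (hv' | hv') hβ
    · exact not_idxOf_lt_of_mem_blockStarts hnd hmem hA hv' hβ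
    · exact not_idxOf_lt_of_mem_blockStarts hnd hmem (fun X hX => (hA X hX).compl) hv' hβ
  have hinj : Set.InjOn B.blockIndex S := fun v hv v' hv' hβ =>
    (List.idxOf_inj (hmem v)).1 <| le_antisymm (not_lt.1 (hstart hv hβ.symm))
      (not_lt.1 (hstart hv' hβ))
  calc G.blockCount (B.flatten.idxOf ·) A + G.blockCount (B.flatten.idxOf ·) Aᶜ = S.ncard :=
        (Set.ncard_union_eq (Set.disjoint_left.2 fun _ h h' => h'.1 h.1)).symm
    _ ≤ (Set.Iio B.length).ncard :=
        Set.ncard_le_ncard_of_injOn _ (fun v _ => List.blockIndex_lt_length (hmem v)) hinj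
    _ = B.length := Set.ncard_Iio_nat _

def IsShortestBlockOrdering (G : Multigraph) (A : Set G.V) (k : ℕ) (B : List (List G.V)) :
    Prop :=
  G.IsBlockOrdering A k B ∧ ∀ B', G.IsBlockOrdering A k B' → B.length ≤ B'.length

theorem exists_isShortestBlockOrdering (G : Multigraph) (A : Set G.V) :
    ∃ B, G.IsShortestBlockOrdering A G.cutwidth B := by
  obtain ⟨L, hnd, hmem, hL⟩ := G.exists_list_prefix_delta_le_cutwidth
  obtain ⟨B, hB, hmin⟩ := (measure List.length).wf.has_min {B | G.IsBlockOrdering A G.cutwidth B}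
    ⟨_, isBlockOrdering_map_singleton hnd hmem hL⟩
  exact ⟨B, hB, fun B' hB' => not_lt.1 (hmin B' hB')⟩

namespace IsShortestBlockOrdering

theorem opposite (hB : G.IsShortestBlockOrdering A k B) {B₁ B₂ : List (List G.V)}
    {X Y : List G.V} (h : B = B₁ ++ X :: Y :: B₂) : ∀ x ∈ X, ∀ y ∈ Y, (x ∈ A ↔ y ∉ A) := by
  subst h
  intro x hx y hy
  by_contra hxy
  have hmono := (hB.1.isMonochromatic X (by simp)).append (hB.1.isMonochromatic Y (by simp))
    hx hy (by tauto)
  have := hB.2 _ (hB.1.merge hmono)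
  simp at this

theorem no_weak_local_max (hB : G.IsShortestBlockOrdering A k B) {B₁ B₂ : List (List G.V)}
    {X Y : List G.V} (h : B = B₁ ++ X :: Y :: B₂) (hlen : 3 ≤ B.length)
    (hX : ∀ v ∈ X, v ∉ G.cutEnds A) :
    G.delta {v | v ∈ B₁.flatten ++ X} < G.delta {v | v ∈ B₁.flatten} ∨
      G.delta {v | v ∈ B₁.flatten ++ X} < G.delta {v | v ∈ B₁.flatten ++ X ++ Y} := by
  subst h
  by_contra hcon
  push Not at hcon
  have hXY := hB.opposite rfl
  have hB' : G.IsShortestBlockOrdering A k (B₁ ++ Y :: X :: B₂) :=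
    ⟨hB.1.swap (edge_misses_of_opposite hX hXY) hcon.1 hcon.2, by simpa using hB.2⟩
  obtain ⟨x, hx⟩ := List.exists_mem_of_ne_nil X (hB.1.ne_nil X (by simp))
  obtain ⟨y, hy⟩ := List.exists_mem_of_ne_nil Y (hB.1.ne_nil Y (by simp))
  have hxy := hXY x hx y hy
  -- after the swap, a neighbour of the pair touches a block of its own side and could be merged
  rcases List.eq_nil_or_concat' B₁ with rfl | ⟨B₁, Z, rfl⟩
  · obtain ⟨W, B₂, rfl⟩ : ∃ W B₂', B₂ = W :: B₂' := by
      cases B₂ with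
      | nil => simp at hlen
      | cons W B₂ => exact ⟨W, B₂, rfl⟩
    obtain ⟨w, hw⟩ := List.exists_mem_of_ne_nil W (hB.1.ne_nil W (by simp))
    have := hB.opposite (B₁ := [X]) rfl y hy w hw
    have := hB'.opposite (B₁ := [Y]) rfl x hx w hw
    tauto
  · obtain ⟨z, hz⟩ := List.exists_mem_of_ne_nil Z (hB.1.ne_nil Z (by simp))
    have := hB.opposite (B₁ := B₁) (B₂ := Y :: B₂) (by simp) z hz x hx
    have := hB'.opposite (B₁ := B₁) (B₂ := X :: B₂) (by simp) z hz y hy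
    tauto

theorem no_weak_local_max_at (hB : G.IsShortestBlockOrdering A k B) (hlen : 3 ≤ B.length)
    {t : ℕ} (ht : t + 1 < B.length) (hX : ∀ v ∈ B[t], v ∉ G.cutEnds A) :
    G.delta {v | v ∈ (B.take (t + 1)).flatten} < G.delta {v | v ∈ (B.take t).flatten} ∨
      G.delta {v | v ∈ (B.take (t + 1)).flatten} <
        G.delta {v | v ∈ (B.take (t + 2)).flatten} := by
  have hsplit : B = B.take t ++ B[t] :: B[t + 1] :: B.drop (t + 2) := by
    rw [← List.drop_eq_getElem_cons, ← List.drop_eq_getElem_cons, List.take_append_drop]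
  have h₁ : (B.take (t + 1)).flatten = (B.take t).flatten ++ B[t] := by
    rw [List.take_succ_eq_append_getElem (by omega), List.flatten_append, List.flatten_singleton]
  have h₂ : (B.take (t + 2)).flatten = (B.take t).flatten ++ B[t] ++ B[t + 1] := by
    rw [List.take_succ_eq_append_getElem ht, List.flatten_append, h₁, List.flatten_singleton]
  rw [h₁, h₂]
  exact hB.no_weak_local_max hsplit hlen hX

theorem exists_mem_image_blockIndex_cutEnds [DecidableEq G.V]
    (hB : G.IsShortestBlockOrdering A k B) {s : ℕ} (hs : s + (2 * k + 3) ≤ B.length) :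
    ∃ i ∈ B.blockIndex '' G.cutEnds A, s ≤ i ∧ i < s + (2 * k + 3) := by
  by_contra hcon
  push Not at hcon
  have hclean : ∀ t (ht : t < 2 * k + 2), ∀ v ∈ B[s + t], v ∉ G.cutEnds A := by
    intro t ht v hv hcut
    have := hcon _ ⟨v, hcut, rfl⟩
    rw [List.blockIndex_eq_of_mem hB.1.nodup _ hv] at this
    omega
  have := le_add_of_no_weak_local_max (d := fun t => G.delta {v | v ∈ (B.take (s + t)).flatten})
    (n := 2 * k + 2) (fun t => hB.1.prefix_delta_le _ (List.flatten_take_prefix B _))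
    (fun t ht => hB.no_weak_local_max_at (t := s + t) (by omega) (by omega) (hclean t ht))
  have := hB.1.prefix_delta_le _ (List.flatten_take_prefix B (s + 0))
  omega

end IsShortestBlockOrdering

end Multigraph

open Multigraph in
theorem optimum_ordering_with_few_blocks_general
    (ℓ : ℕ) (G : Multigraph) (A : Set G.V) (hA : G.delta A = ℓ) :
    ∃ ρ : G.V → ℕ, Function.Injective ρ ∧ G.cwOrd ρ = G.cutwidth ∧
      G.blockCount ρ A + G.blockCount ρ Aᶜ ≤
        (2 * ℓ + 1) * (2 * G.cutwidth + 3) + 2 * ℓ := by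
  classical
  obtain ⟨B, hB⟩ := G.exists_isShortestBlockOrdering A
  refine ⟨(B.flatten.idxOf ·), List.idxOf_injective hB.1.mem_flatten, hB.1.cwOrd_eq_cutwidth, ?_⟩
  set D := B.blockIndex '' G.cutEnds A
  have hD : (D ∩ Set.Iio B.length).ncard ≤ 2 * ℓ :=
    calc (D ∩ Set.Iio B.length).ncard ≤ D.ncard := Set.ncard_inter_le_ncard_left _ _
      _ ≤ (G.cutEnds A).ncard := Set.ncard_image_le (Set.toFinite _)
      _ ≤ 2 * ℓ := hA ▸ G.ncard_cutEnds_le A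
  have hlen : B.length < ((D ∩ Set.Iio B.length).ncard + 1) * (2 * G.cutwidth + 3) :=
    lt_mul_of_forall_exists_mem_window _ fun _ hs => hB.exists_mem_image_blockIndex_cutEnds hs
  calc _ ≤ B.length :=
        blockCount_add_blockCount_compl_le hB.1.nodup hB.1.mem_flatten hB.1.isMonochromatic
    _ ≤ (2 * ℓ + 1) * (2 * G.cutwidth + 3) := hlen.le.trans (by gcongr)
    _ ≤ _ := Nat.le_add_right _ _

open Multigraph in
/-- if `(A, Aᶜ)` is a cut of size `ℓ`, then some optimum-cutwidth
ordering has at most `(2ℓ+1)(2·cw(G)+3) + 2ℓ` many `(A,B)`-blocks. -/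
theorem optimum_ordering_with_few_blocks
    (ℓ : ℕ) (hℓ : 1 ≤ ℓ) (G : Multigraph) (A : Set G.V) (hA : G.delta A = ℓ) :
    ∃ ρ : G.V → ℕ, Function.Injective ρ ∧ G.cwOrd ρ = G.cutwidth ∧
      G.blockCount ρ A + G.blockCount ρ Aᶜ ≤
        (2 * ℓ + 1) * (2 * G.cutwidth + 3) + 2 * ℓ :=
  optimum_ordering_with_few_blocks_general ℓ G A hA
end

section
/- Let k, ℓ be positive integers and let 𝐀 = (A, x̄) and 𝐁 = (B, ȳ) be two k-boundaried graphs. Let σ be an ordering of the vertices of 𝐀 ⊕ 𝐁 with an ℓ-bucketing T. If the bucket T^{-1}(i) contains no vertex of A, for some i ∈ [ℓ], then width(𝐀⊕𝐁, σ, T, i) = width(A, σ|_A, T|_A, i) + width(B*, σ|_{B*}, T|_{B*}, i), where in B* each extension vertex y_j' is identified with the vertex x_j of A (so T|_{B*}(y_j') = T(x_j) and y_j' is placed in σ|_{B*} at the position of x_j in σ). -/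
/-! Because bucket `i` contains no vertex of `A`, every cut of `𝐀 ⊕ 𝐁` at bucket `i` has on `A`
the same left side, the vertices of earlier buckets. Pulling a cut back along the map `B* → 𝐀 ⊕ 𝐁`
that sends `y_j'` to `x_j` gives a cut of `B*` at bucket `i`, every cut of `B*` arises this way,
and the crossing edges split into those of `A` and those of `B*`. So the cut sizes of `𝐀 ⊕ 𝐁` are
those of `B*` shifted by the single cut size of `A`, and the maxima add. -/

theorem Set.ncard_eq_ncard_preimage_inl_add_ncard_preimage_inr {α β : Type*} [Finite α]
    [Finite β] (s : Set (α ⊕ β)) :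
    s.ncard = (Sum.inl ⁻¹' s).ncard + (Sum.inr ⁻¹' s).ncard := by
  simp only [← Nat.card_coe_set_eq, ← Nat.card_sum]
  exact Nat.card_congr Equiv.subtypeSum

namespace Multigraph

def IsBucketCut {V : Type*} (ρ T : V → ℕ) (i : ℕ) (S : Set V) : Prop :=
  (∀ v, T v < i → v ∈ S) ∧ (∀ v ∈ S, T v ≤ i) ∧
    ∀ u v, T u = i → T v = i → ρ u ≤ ρ v → v ∈ S → u ∈ S

section IsBucketCut

variable {V W : Type*} {ρ T : W → ℕ} {i : ℕ} {S : Set W}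

theorem isBucketCut_setOf_lt (ρ T : W → ℕ) (i : ℕ) : IsBucketCut ρ T i {v | T v < i} :=
  ⟨fun _ hv => hv, fun _ hv => hv.le, fun _ _ _ hv _ hvS => absurd hv hvS.ne⟩

theorem IsBucketCut.preimage (hS : IsBucketCut ρ T i S) (φ : V → W) :
    IsBucketCut (ρ ∘ φ) (T ∘ φ) i (φ ⁻¹' S) :=
  ⟨fun v => hS.1 (φ v), fun v => hS.2.1 (φ v), fun u v => hS.2.2 (φ u) (φ v)⟩

theorem IsBucketCut.mem_iff_of_ne (hS : IsBucketCut ρ T i S) {v : W} (hv : T v ≠ i) :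
    v ∈ S ↔ T v < i :=
  ⟨fun h => (hS.2.1 v h).lt_of_ne hv, hS.1 v⟩

theorem IsBucketCut.eq_setOf_lt (hS : IsBucketCut ρ T i S) (hT : ∀ v, T v ≠ i) :
    S = {v | T v < i} :=
  Set.ext fun v => hS.mem_iff_of_ne (hT v)

end IsBucketCut

theorem bucketWidth_eq_sSup_image_delta (G : Multigraph) (ρ T : G.V → ℕ) (i : ℕ) :
    G.bucketWidth ρ T i = sSup (G.delta '' {S | IsBucketCut ρ T i S}) := by
  simp only [bucketWidth, IsBucketCut, Set.image, Set.mem_ofPred_eq, eq_comm, and_assoc]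

theorem bucketWidth_eq_delta_of_forall_ne (G : Multigraph) (ρ T : G.V → ℕ) {i : ℕ}
    (hT : ∀ v, T v ≠ i) : G.bucketWidth ρ T i = G.delta {v | T v < i} := by
  have hcuts : {S | IsBucketCut ρ T i S} = {{v | T v < i}} :=
    Set.ext fun S => ⟨fun hS => hS.eq_setOf_lt hT, fun hS => hS ▸ isBucketCut_setOf_lt ρ T i⟩
  rw [bucketWidth_eq_sSup_image_delta, hcuts, Set.image_singleton, csSup_singleton]

section Join

variable {k : ℕ} {A B : Multigraph} (x : Fin k → A.V) (y : Fin k → B.V)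

def extensionToJoin : (B.extension y).V → (join A B x y).V :=
  Sum.elim Sum.inr (Sum.inl ∘ x)

theorem delta_join (S : Set (join A B x y).V) :
    (join A B x y).delta S =
      A.delta (Sum.inl ⁻¹' S) + (B.extension y).delta (extensionToJoin x y ⁻¹' S) := by
  -- the edge `x_j y_j` of the join is the edge `y_j y_j'` of `B*`, traversed backwards
  have hconnector : {j : Fin k | ¬ (Sum.inl (x j) ∈ S ↔ Sum.inr (y j) ∈ S)} =
      {j : Fin k | ¬ (Sum.inr (y j) ∈ S ↔ Sum.inl (x j) ∈ S)} :=
    Set.ext fun _ => not_congr Iff.comm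
  have hjoin : (join A B x y).delta S = _ :=
    (Set.ncard_eq_ncard_preimage_inl_add_ncard_preimage_inr (α := A.E ⊕ B.E) (β := Fin k) _).trans
      (congrArg (· + _) (Set.ncard_eq_ncard_preimage_inl_add_ncard_preimage_inr _))
  have hext : (B.extension y).delta (extensionToJoin x y ⁻¹' S) = _ :=
    Set.ncard_eq_ncard_preimage_inl_add_ncard_preimage_inr (α := B.E) (β := Fin k) _
  rw [hjoin, hext, add_assoc]
  exact congrArg₂ _ rfl (congrArg₂ _ rfl (congrArg Set.ncard hconnector))

variable {x y} {ρ T : (join A B x y).V → ℕ} {i : ℕ}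

def joinCut (T : (join A B x y).V → ℕ) (i : ℕ) (S' : Set (B.extension y).V) :
    Set (join A B x y).V :=
  {v | Sum.elim (fun a => T (Sum.inl a) < i) (fun b => Sum.inl b ∈ S') v}

theorem IsBucketCut.joinCut (hA : ∀ a, T (Sum.inl a) ≠ i)
    {S' : Set (B.extension y).V}
    (hS' : IsBucketCut (ρ ∘ extensionToJoin x y) (T ∘ extensionToJoin x y) i S') :
    IsBucketCut ρ T i (joinCut T i S') := by
  refine ⟨?_, ?_, ?_⟩
  · rintro (a | b) hv
    exacts [hv, hS'.1 (Sum.inl b) hv]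
  · rintro (a | b) hv
    exacts [hv.le, hS'.2.1 (Sum.inl b) hv]
  · rintro (a | b) (a' | b') hu hv hle hvS
    · exact absurd hu (hA a)
    · exact absurd hu (hA a)
    · exact absurd hv (hA a')
    · exact hS'.2.2 (Sum.inl b) (Sum.inl b') hu hv hle hvS

theorem preimage_extensionToJoin_joinCut (hA : ∀ a, T (Sum.inl a) ≠ i)
    {S' : Set (B.extension y).V}
    (hS' : IsBucketCut (ρ ∘ extensionToJoin x y) (T ∘ extensionToJoin x y) i S') :
    extensionToJoin x y ⁻¹' joinCut T i S' = S' := by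
  ext (b | j)
  · rfl
  · exact (hS'.mem_iff_of_ne (v := Sum.inr j) (hA (x j))).symm

theorem image_delta_isBucketCut_join (hA : ∀ a, T (Sum.inl a) ≠ i) :
    (join A B x y).delta '' {S | IsBucketCut ρ T i S} =
      (A.delta {a | T (Sum.inl a) < i} + ·) '' ((B.extension y).delta ''
        {S' | IsBucketCut (ρ ∘ extensionToJoin x y) (T ∘ extensionToJoin x y) i S'}) := by
  rw [Set.image_image]
  ext w
  constructor
  · rintro ⟨S, hS, rfl⟩
    refine ⟨_, hS.preimage (extensionToJoin x y), ?_⟩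
    rw [delta_join]
    exact congrArg (· + _) (congrArg A.delta ((hS.preimage Sum.inl).eq_setOf_lt hA)).symm
  · rintro ⟨S', hS', rfl⟩
    refine ⟨_, hS'.joinCut hA, ?_⟩
    rw [delta_join, preimage_extensionToJoin_joinCut hA hS']
    rfl

end Join

end Multigraph

open Multigraph in
theorem bucketWidth_join_eq_add_general
    (k : ℕ) (A B : Multigraph) (x : Fin k → A.V) (y : Fin k → B.V)
    (ρ : (join A B x y).V → ℕ) (T : (join A B x y).V → ℕ) (i : ℕ)
    (hbucket : ∀ v : A.V, T (Sum.inl v) ≠ i) :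
    (join A B x y).bucketWidth ρ T i =
      A.bucketWidth (fun v => ρ (Sum.inl v)) (fun v => T (Sum.inl v)) i +
      (B.extension y).bucketWidth
        (Sum.elim (fun v => ρ (Sum.inr v)) (fun j => ρ (Sum.inl (x j))))
        (Sum.elim (fun v => T (Sum.inr v)) (fun j => T (Sum.inl (x j)))) i := by
  have hρ : Sum.elim (fun v => ρ (Sum.inr v)) (fun j => ρ (Sum.inl (x j))) =
      ρ ∘ extensionToJoin x y := (Sum.comp_elim _ _ _).symm
  have hT : Sum.elim (fun v => T (Sum.inr v)) (fun j => T (Sum.inl (x j))) =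
      T ∘ extensionToJoin x y := (Sum.comp_elim _ _ _).symm
  have hcuts :
      {S' | IsBucketCut (ρ ∘ extensionToJoin x y) (T ∘ extensionToJoin x y) i S'}.Nonempty :=
    ⟨_, isBucketCut_setOf_lt _ _ i⟩
  rw [hρ, hT, bucketWidth_eq_delta_of_forall_ne A _ (fun v => T (Sum.inl v)) hbucket,
    bucketWidth_eq_sSup_image_delta, image_delta_isBucketCut_join hbucket,
    bucketWidth_eq_sSup_image_delta]
  exact ((Set.toFinite _).map_sSup_of_monotone add_right_mono (hcuts.image _)).symm

open Multigraph in
/-- if bucket `i` contains no vertex of `A`, then the width of bucket `i`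
in `𝐀 ⊕ 𝐁` is the sum of its width relative to `A` and relative to `B*` (where the
extension vertex `y_j'` of `B*` is identified with the vertex `x_j` of `A`). -/
theorem bucketWidth_join_eq_add
    (k ℓ : ℕ) (hk : 1 ≤ k) (hℓ : 1 ≤ ℓ)
    (A B : Multigraph) (x : Fin k → A.V) (y : Fin k → B.V)
    (ρ : (join A B x y).V → ℕ) (hρ : Function.Injective ρ)
    (T : (join A B x y).V → ℕ) (hT : (join A B x y).IsBucketing ρ ℓ T)
    (i : ℕ) (hi : i ∈ Set.Icc 1 ℓ)
    (hbucket : ∀ v : A.V, T (Sum.inl v) ≠ i) :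
    (join A B x y).bucketWidth ρ T i =
      A.bucketWidth (fun v => ρ (Sum.inl v)) (fun v => T (Sum.inl v)) i +
      (B.extension y).bucketWidth
        (Sum.elim (fun v => ρ (Sum.inr v)) (fun j => ρ (Sum.inl (x j))))
        (Sum.elim (fun v => T (Sum.inr v)) (fun j => T (Sum.inl (x j)))) i :=
  bucketWidth_join_eq_add_general k A B x y ρ T i hbucket
end

section
/- Let N be a positive integer. For all positive integers s and r and every word w of length N^r over the alphabet A_{s,r} = {s, s+1, …, s+r−1}, there exist a symbol k ∈ A_{s,r} and a contiguous subword u of w such that (a) every symbol occurring in u is at least k, and (b) the symbol k occurs at least N times in u. -/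
/-! Induction on the alphabet size `r`. Let `k` be the least letter. If `k` occurs at least `N`
times, the whole word is the required factor. Otherwise its fewer than `N` occurrences miss one
of the `N` consecutive blocks of length `N ^ (r - 1)`; that block is a word over the remaining
`r - 1` letters, and the induction hypothesis applies to it. -/

open Finset

lemma exists_block_forall_not_of_card_lt {p : ℕ → Prop} [DecidablePred p] {a n L : ℕ}
    (h : #{i ∈ Ico a (a + n * L) | p i} < n) :
    ∃ j < n, ∀ i ∈ Ico (a + j * L) (a + j * L + L), ¬ p i := by
  set P := {i ∈ Ico a (a + n * L) | p i}
  have hcard : #(P.image fun i => (i - a) / L) < #(range n) :=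
    (card_image_le.trans_lt h).trans_eq (card_range n).symm
  obtain ⟨j, hj, hjP⟩ := exists_mem_notMem_of_card_lt_card hcard
  rw [mem_range] at hj
  refine ⟨j, hj, fun i hi hpi => hjP (mem_image.mpr ⟨i, ?_, ?_⟩)⟩
  · have : (j + 1) * L ≤ n * L := Nat.mul_le_mul_right L hj
    simp only [P, mem_filter, mem_Ico] at hi ⊢
    exact ⟨⟨by omega, by rw [Nat.succ_mul] at this; omega⟩, hpi⟩
  · rw [mem_Ico] at hi
    exact Nat.div_eq_of_lt_le (by omega) (by rw [Nat.succ_mul]; omega)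

theorem exists_factor_forall_ge_and_count_ge {α : Type*} [LinearOrder α] {N : ℕ} (hN : 0 < N)
    (w : ℕ → α) (r : ℕ) (A : Finset α) (hA : #A ≤ r) (a : ℕ)
    (hw : ∀ i ∈ Ico a (a + N ^ r), w i ∈ A) :
    ∃ k ∈ A, ∃ b c, a ≤ b ∧ b < c ∧ c ≤ a + N ^ r ∧
      (∀ i ∈ Ico b c, k ≤ w i) ∧ N ≤ #{i ∈ Ico b c | w i = k} := by
  induction r generalizing A a with
  | zero => simpa [card_eq_zero.mp (Nat.le_zero.mp hA)] using hw a
  | succ r ih =>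
    have hA_ne : A.Nonempty := ⟨w a, hw a (by simp [pow_pos hN])⟩
    set k := A.min' hA_ne
    by_cases hk : N ≤ #{i ∈ Ico a (a + N ^ (r + 1)) | w i = k}
    · exact ⟨k, A.min'_mem hA_ne, a, a + N ^ (r + 1), le_rfl, by simp [pow_pos hN], le_rfl,
        fun i hi => A.min'_le _ (hw i hi), hk⟩
    rw [pow_succ'] at hk hw ⊢
    obtain ⟨j, hj, hjk⟩ := exists_block_forall_not_of_card_lt (not_le.mp hk)
    have hblock : (j + 1) * N ^ r ≤ N * N ^ r := Nat.mul_le_mul_right _ hj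
    rw [Nat.succ_mul] at hblock
    have hw' : ∀ i ∈ Ico (a + j * N ^ r) (a + j * N ^ r + N ^ r), w i ∈ A.erase k := by
      intro i hi
      refine mem_erase.mpr ⟨hjk i hi, hw i ?_⟩
      simp only [mem_Ico] at hi ⊢
      omega
    have hA' : #(A.erase k) ≤ r := by
      rw [card_erase_of_mem (A.min'_mem hA_ne)]
      omega
    obtain ⟨k', hk', b, c, hb, hbc, hc, hmin, hcount⟩ :=
      ih (A.erase k) hA' (a + j * N ^ r) hw'
    exact ⟨k', mem_of_mem_erase hk', b, c, by omega, hbc, by omega, hmin, hcount⟩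

theorem word_unpump_general (N : ℕ) (hN : 1 ≤ N) (s r : ℕ) (hr : 1 ≤ r)
    (w : Fin (N ^ r) → ℕ) (hw : ∀ i, w i ∈ Set.Icc s (s + r - 1)) :
    ∃ k ∈ Set.Icc s (s + r - 1), ∃ a b : ℕ, a ≤ b ∧ b < N ^ r ∧
      (∀ i : Fin (N ^ r), a ≤ (i : ℕ) → (i : ℕ) ≤ b → k ≤ w i) ∧
      N ≤ {i : Fin (N ^ r) | a ≤ (i : ℕ) ∧ (i : ℕ) ≤ b ∧ w i = k}.ncard := by
  set W : ℕ → ℕ := fun i => if h : i < N ^ r then w ⟨i, h⟩ else s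
  have hW (i : Fin (N ^ r)) : W i = w i := dif_pos i.isLt
  have hA : #(Icc s (s + r - 1)) ≤ r := by simp only [Nat.card_Icc]; omega
  obtain ⟨k, hk, b, c, -, hbc, hc, hmin, hcount⟩ :=
    exists_factor_forall_ge_and_count_ge hN W r _ hA 0 fun i hi => by
      obtain ⟨-, hi⟩ : 0 ≤ i ∧ i < N ^ r := by simpa using hi
      simpa [W, hi] using hw ⟨i, hi⟩
  have hcount_eq : (({i ∈ Ico b c | W i = k} : Finset ℕ) : Set ℕ) =
      Fin.val '' {i : Fin (N ^ r) | b ≤ (i : ℕ) ∧ (i : ℕ) ≤ c - 1 ∧ w i = k} := by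
    ext i
    simp only [coe_filter, mem_Ico, Set.mem_ofPred_eq, Set.mem_image]
    constructor
    · rintro ⟨hi, hWi⟩
      exact ⟨⟨i, by omega⟩,
        ⟨hi.1, Nat.le_sub_one_of_lt hi.2, (hW ⟨i, by omega⟩).symm.trans hWi⟩, rfl⟩
    · rintro ⟨i, ⟨hbi, hic, hwi⟩, rfl⟩
      exact ⟨⟨hbi, by omega⟩, (hW i).trans hwi⟩
  refine ⟨k, by simpa using hk, b, c - 1, by omega, by omega,
    fun i hbi hic => hW i ▸ hmin i (mem_Ico.mpr ⟨hbi, by omega⟩), ?_⟩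
  rwa [← Set.ncard_image_of_injective _ Fin.val_injective, ← hcount_eq, Set.ncard_coe_finset]

/-- for every word `w` of length `N^r` over the alphabet
`A_{s,r} = {s,…,s+r−1}`, there are a symbol `k ∈ A_{s,r}` and a contiguous subword
(given by index bounds `a ≤ b`) all of whose symbols are `≥ k`, and in which `k`
occurs at least `N` times. -/
theorem word_unpump (N : ℕ) (hN : 1 ≤ N) (s r : ℕ) (hs : 1 ≤ s) (hr : 1 ≤ r)
    (w : Fin (N ^ r) → ℕ) (hw : ∀ i, w i ∈ Set.Icc s (s + r - 1)) :
    ∃ k ∈ Set.Icc s (s + r - 1), ∃ a b : ℕ, a ≤ b ∧ b < N ^ r ∧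
      (∀ i : Fin (N ^ r), a ≤ (i : ℕ) → (i : ℕ) ≤ b → k ≤ w i) ∧
      N ≤ {i : Fin (N ^ r) | a ≤ (i : ℕ) ∧ (i : ℕ) ≤ b ∧ w i = k}.ncard :=
  word_unpump_general N hN s r hr w hw
end

section
/- Let r and N be positive integers and let w be a word of length N^r over the alphabet [r] = {1,…,r}. Then there exist a number k ∈ [r] and a contiguous subword u of w such that (a) every symbol occurring in u is at least k, and (b) the symbol k occurs at least N times in u. -/
/-!
Induction on the size `s` of the alphabet `[c, c + s)`. In a word of length `N ^ (s + 1)`,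
either the least letter `c` occurs `N` times, and the whole word is the factor, or one of the
`N` consecutive blocks of length `N ^ s` avoids `c` and is thus a word over `[c + 1, c + 1 + s)`.
-/

open Finset

theorem exists_block_forall_not_of_card_filter_lt (p : ℕ → Prop) [DecidablePred p] (a M N : ℕ)
    (hcard : #{i ∈ Ico a (a + N * M) | p i} < N) :
    ∃ j < N, ∀ i ∈ Ico (a + j * M) (a + j * M + M), ¬ p i := by
  induction N with
  | zero => simp at hcard
  | succ N ih =>
    by_cases hlast : ∀ i ∈ Ico (a + N * M) (a + N * M + M), ¬ p i
    · exact ⟨N, N.lt_succ_self, hlast⟩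
    push Not at hlast
    obtain ⟨i, hi, hpi⟩ := hlast
    rw [mem_Ico] at hi
    have hlt : #{i ∈ Ico a (a + N * M) | p i} < #{i ∈ Ico a (a + (N + 1) * M) | p i} := by
      refine card_lt_card ((ssubset_iff_of_subset ?_).mpr ⟨i, ?_, ?_⟩)
      · exact filter_subset_filter _ (Ico_subset_Ico_right (by nlinarith))
      · simp only [mem_filter, mem_Ico]
        exact ⟨⟨by omega, by nlinarith⟩, hpi⟩
      · simp only [mem_filter, mem_Ico]
        omega
    obtain ⟨j, hj, hblock⟩ := ih (by omega)
    exact ⟨j, by omega, hblock⟩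

theorem exists_factor_with_frequent_least_letter (w : ℕ → ℕ) (N s c a : ℕ)
    (hw : ∀ i ∈ Ico a (a + N ^ s), w i ∈ Ico c (c + s)) :
    ∃ k ∈ Ico c (c + s), ∃ a' b', a ≤ a' ∧ b' ≤ a + N ^ s ∧
      (∀ i ∈ Ico a' b', k ≤ w i) ∧ N ≤ #{i ∈ Ico a' b' | w i = k} := by
  induction s generalizing c a with
  | zero => simpa using hw a (by simp)
  | succ s ih =>
    by_cases hfreq : N ≤ #{i ∈ Ico a (a + N ^ (s + 1)) | w i = c}
    · exact ⟨c, by simp, a, _, le_rfl, le_rfl, fun i hi => (mem_Ico.mp (hw i hi)).1, hfreq⟩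
    rw [not_le, pow_succ'] at hfreq
    obtain ⟨j, hj, hblock⟩ := exists_block_forall_not_of_card_filter_lt (w · = c) a _ N hfreq
    have hblock_le : j * N ^ s + N ^ s ≤ N ^ (s + 1) := by
      rw [pow_succ', ← Nat.succ_mul]
      exact Nat.mul_le_mul_right _ hj
    obtain ⟨k, hk, a', b', ha', hb', hle, hcard⟩ := ih (c + 1) (a + j * N ^ s) fun i hi => by
      have hwi := hw i (by simp only [mem_Ico] at hi ⊢; omega)
      have hne := hblock i hi
      simp only [mem_Ico] at hwi ⊢
      omega
    rw [mem_Ico] at hk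
    exact ⟨k, mem_Ico.mpr ⟨by omega, by omega⟩, a', b', by omega, by omega, hle, hcard⟩

theorem ncard_setOf_fin_eq_card_filter_Icc {α : Type*} [DecidableEq α] {n : ℕ} {w : Fin n → α} {W : ℕ → α}
    (hW : ∀ i : Fin n, W i = w i) {a b : ℕ} (hb : b < n) (k : α) :
    {i : Fin n | a ≤ (i : ℕ) ∧ (i : ℕ) ≤ b ∧ w i = k}.ncard = #{i ∈ Icc a b | W i = k} := by
  rw [← Set.ncard_image_of_injective _ Fin.val_injective, ← Set.ncard_coe_finset]
  congr 1
  ext i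
  simp only [Set.mem_image, Set.mem_ofPred_eq, coe_filter, mem_Icc]
  constructor
  · rintro ⟨i, ⟨h₁, h₂, h₃⟩, rfl⟩
    exact ⟨⟨h₁, h₂⟩, hW i ▸ h₃⟩
  · rintro ⟨⟨h₁, h₂⟩, h₃⟩
    have hi : i < n := by omega
    exact ⟨⟨i, hi⟩, ⟨h₁, h₂, hW ⟨i, hi⟩ ▸ h₃⟩, rfl⟩

theorem word_unpump_one_general (r N : ℕ) (hN : 1 ≤ N)
    (w : Fin (N ^ r) → ℕ) (hw : ∀ i, w i ∈ Set.Icc 1 r) :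
    ∃ k ∈ Set.Icc 1 r, ∃ a b : ℕ, a ≤ b ∧ b < N ^ r ∧
      (∀ i : Fin (N ^ r), a ≤ (i : ℕ) → (i : ℕ) ≤ b → k ≤ w i) ∧
      N ≤ {i : Fin (N ^ r) | a ≤ (i : ℕ) ∧ (i : ℕ) ≤ b ∧ w i = k}.ncard := by
  set W : ℕ → ℕ := fun i => if h : i < N ^ r then w ⟨i, h⟩ else 0
  have hW : ∀ i : Fin (N ^ r), W i = w i := fun i => dif_pos i.isLt
  obtain ⟨k, hk, a, b, -, hb, hle, hcard⟩ :=
    exists_factor_with_frequent_least_letter W N r 1 0 fun i hi => by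
      have hlt : i < N ^ r := by simpa using hi
      have hwi := hw ⟨i, hlt⟩
      simp only [Set.mem_Icc] at hwi
      simp only [W, dif_pos hlt, mem_Ico]
      omega
  obtain ⟨i, hi⟩ := card_pos.mp (hN.trans hcard)
  rw [mem_filter, mem_Ico] at hi
  obtain ⟨b, rfl⟩ : ∃ b', b = b' + 1 := ⟨b - 1, by omega⟩
  rw [Ico_add_one_right_eq_Icc] at hle hcard
  rw [mem_Ico] at hk
  refine ⟨k, ⟨hk.1, by omega⟩, a, b, by omega, by omega,
    fun i h₁ h₂ => hW i ▸ hle i (mem_Icc.mpr ⟨h₁, h₂⟩), ?_⟩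
  rwa [ncard_setOf_fin_eq_card_filter_Icc hW (by omega)]

/-- for every word `w` of length `N^r` over the alphabet `{1,…,r}`,
there are a symbol `k ∈ {1,…,r}` and a contiguous subword (given by index bounds
`a ≤ b`) all of whose symbols are `≥ k`, and in which `k` occurs at least `N` times. -/
theorem word_unpump_one (r N : ℕ) (hr : 1 ≤ r) (hN : 1 ≤ N)
    (w : Fin (N ^ r) → ℕ) (hw : ∀ i, w i ∈ Set.Icc 1 r) :
    ∃ k ∈ Set.Icc 1 r, ∃ a b : ℕ, a ≤ b ∧ b < N ^ r ∧
      (∀ i : Fin (N ^ r), a ≤ (i : ℕ) → (i : ℕ) ≤ b → k ≤ w i) ∧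
      N ≤ {i : Fin (N ^ r) | a ≤ (i : ℕ) ∧ (i : ℕ) ≤ b ∧ w i = k}.ncard :=
  word_unpump_one_general r N hN w hw
end

section
/- Let k, ℓ ∈ ℕ and let 𝐀 = (A, x̄) and 𝐁 = (B, ȳ) be two k-boundaried graphs. Suppose there is an immersion model (φ,ψ) of A in B such that φ(x_i) = y_i for all i ∈ [k]. Then for every (k,ℓ)-bucket interface (b, b', μ, μ*): if 𝐁 conforms with (b, b', μ, μ*), then 𝐀 also conforms with (b, b', μ, μ*). -/
/-!
Push the ordering and the bucketing of `B*` back along the immersion `φ` (extended to `A*` by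
sending each pendant edge `x_i x_i'` to `y_i y_i'`). A cut `S` of `cuts(A, σ, T, j)` is the
preimage under `φ` of the cut of `cuts(B, σ, T, j)` whose bucket-`j` part consists of the
vertices preceding every `φ(v)` with `v` in bucket `j` but outside `S`. Each edge of `A` across
`S` has its path in `B` cross that cut, and the paths are edge-disjoint, so widths can only drop.
-/

namespace Multigraph

theorem Walk.exists_mem_edges_of_not_iff {G : Multigraph} (S : Set G.V) :
    ∀ {a b : G.V} (p : G.Walk a b), ¬ (a ∈ S ↔ b ∈ S) →
      ∃ f ∈ p.edges, ¬ ((G.ends f).1 ∈ S ↔ (G.ends f).2 ∈ S)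
  | _, _, .nil _, h => absurd Iff.rfl h
  | u, w, .cons (v := v) e he p, h => by
    by_cases hc : (G.ends e).1 ∈ S ↔ (G.ends e).2 ∈ S
    · have huv : u ∈ S ↔ v ∈ S := by
        rcases he with he | he <;> rw [he] at hc
        exacts [hc, hc.symm]
      obtain ⟨f, hf, hfS⟩ := exists_mem_edges_of_not_iff S p fun hvw => h (huv.trans hvw)
      exact ⟨f, List.mem_cons_of_mem _ hf, hfS⟩
    · exact ⟨e, List.mem_cons_self, hc⟩

theorem delta_preimage_le {H G : Multigraph} (m : H.V → G.V)
    (W : (e : H.E) → G.Walk (m (H.ends e).1) (m (H.ends e).2))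
    (hW : ∀ e e', e ≠ e' → ∀ f, f ∈ (W e).edges → f ∉ (W e').edges) (S : Set G.V) :
    H.delta (m ⁻¹' S) ≤ G.delta S := by
  set s : Set H.E := {e | ¬ ((H.ends e).1 ∈ m ⁻¹' S ↔ (H.ends e).2 ∈ m ⁻¹' S)}
  set t : Set G.E := {f | ¬ ((G.ends f).1 ∈ S ↔ (G.ends f).2 ∈ S)}
  have crossing : ∀ e : s, ∃ f : t, f.1 ∈ (W e).edges := fun e => by
    obtain ⟨f, hf, hft⟩ := Walk.exists_mem_edges_of_not_iff S (W e) e.2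
    exact ⟨⟨f, hft⟩, hf⟩
  choose F hF using crossing
  have hF_inj : Function.Injective F := fun e e' hee' => by
    by_contra hne
    exact hW e e' (Subtype.coe_ne_coe.mpr hne) _ (hF e) (hee' ▸ hF e')
  change s.ncard ≤ t.ncard
  rw [← Nat.card_coe_set_eq, ← Nat.card_coe_set_eq]
  exact Nat.card_le_card_of_injective F hF_inj

theorem delta_le_bucketWidth {G : Multigraph} {ρ T : G.V → ℕ} {i : ℕ} {S : Set G.V}
    (hlt : ∀ v, T v < i → v ∈ S) (hle : ∀ v ∈ S, T v ≤ i)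
    (hdown : ∀ u v : G.V, T u = i → T v = i → ρ u ≤ ρ v → v ∈ S → u ∈ S) :
    G.delta S ≤ G.bucketWidth ρ T i := by
  refine le_csSup ⟨Nat.card G.E, ?_⟩ ⟨S, hlt, hle, hdown, rfl⟩
  rintro w ⟨S', -, -, -, rfl⟩
  exact Set.ncard_le_card _

theorem bucketWidth_comp_le {H G : Multigraph} (m : H.V → G.V)
    (W : (e : H.E) → G.Walk (m (H.ends e).1) (m (H.ends e).2))
    (hW : ∀ e e', e ≠ e' → ∀ f, f ∈ (W e).edges → f ∉ (W e').edges)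
    (ρ T : G.V → ℕ) (j : ℕ) :
    H.bucketWidth (fun v => ρ (m v)) (fun v => T (m v)) j ≤ G.bucketWidth ρ T j := by
  apply csSup_le'
  rintro w ⟨S, hlt, hle, hdown, rfl⟩
  set S' : Set G.V :=
    {z | T z < j ∨ (T z = j ∧ ∀ v, T (m v) = j → v ∉ S → ρ z < ρ (m v))}
  have hpre : m ⁻¹' S' = S := by
    ext v
    constructor
    · rintro (hv | ⟨hv, hbefore⟩)
      · exact hlt v hv
      · by_contra hvS
        exact lt_irrefl _ (hbefore v hv hvS)
    · intro hvS
      rcases (hle v hvS).lt_or_eq with hv | hv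
      · exact Or.inl hv
      · refine Or.inr ⟨hv, fun u hu huS => ?_⟩
        by_contra! hvu
        exact huS (hdown u v hu hv hvu hvS)
  rw [← hpre]
  refine (delta_preimage_le m W hW S').trans (delta_le_bucketWidth (fun z hz => Or.inl hz) ?_ ?_)
  · rintro z (hz | ⟨hz, -⟩) <;> omega
  · rintro u z hu hz hρ (hz' | ⟨-, hbefore⟩)
    · omega
    · exact Or.inr ⟨hu, fun v hv hvS => hρ.trans_lt (hbefore v hv hvS)⟩

def Walk.inlExtension {G : Multigraph} {k : ℕ} (x : Fin k → G.V) :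
    ∀ {a b : G.V}, G.Walk a b → (G.extension x).Walk (Sum.inl a) (Sum.inl b)
  | _, _, .nil _ => .nil _
  | _, _, .cons e he p => .cons (Sum.inl e)
      (by rcases he with he | he
          · exact Or.inl (by simp [extension, he])
          · exact Or.inr (by simp [extension, he]))
      (inlExtension x p)

theorem Walk.edges_inlExtension {G : Multigraph} {k : ℕ} (x : Fin k → G.V) :
    ∀ {a b : G.V} (p : G.Walk a b), (p.inlExtension x).edges = p.edges.map Sum.inl
  | _, _, .nil _ => rfl
  | _, _, .cons e _ p => congrArg (Sum.inl e :: ·) (edges_inlExtension x p)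

namespace ImmersionModel

variable {k : ℕ} {A B : Multigraph} {x : Fin k → A.V} {y : Fin k → B.V}

def extensionWalk (M : ImmersionModel A B) (hM : ∀ i, M.vmap (x i) = y i) :
    (e : (A.extension x).E) → (B.extension y).Walk
      (Sum.map M.vmap id ((A.extension x).ends e).1)
      (Sum.map M.vmap id ((A.extension x).ends e).2)
  | .inl e => (M.emap e).inlExtension y
  | .inr i => .cons (.inr i) (Or.inl (by simp [extension, hM i])) (.nil _)

theorem edges_extensionWalk_inl (M : ImmersionModel A B) (hM : ∀ i, M.vmap (x i) = y i)
    (e : A.E) : (M.extensionWalk hM (.inl e)).edges = (M.emap e).edges.map Sum.inl :=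
  Walk.edges_inlExtension y (M.emap e)

theorem extensionWalk_edges_disjoint (M : ImmersionModel A B) (hM : ∀ i, M.vmap (x i) = y i) :
    ∀ e e', e ≠ e' → ∀ f, f ∈ (M.extensionWalk hM e).edges →
      f ∉ (M.extensionWalk hM e').edges := by
  rintro (e | i) (e' | i') hne f hf hf'
  · rw [edges_extensionWalk_inl] at hf hf'
    obtain ⟨g, hg, rfl⟩ := List.mem_map.mp hf
    obtain ⟨g', hg', hgg'⟩ := List.mem_map.mp hf'
    cases Sum.inl_injective hgg'
    exact M.edgeDisj e e' (fun h => hne (congrArg _ h)) g hg hg'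
  · rw [edges_extensionWalk_inl] at hf
    obtain ⟨g, -, rfl⟩ := List.mem_map.mp hf
    exact Sum.inl_ne_inr (List.mem_singleton.mp hf')
  · rw [edges_extensionWalk_inl] at hf'
    obtain ⟨g, -, rfl⟩ := List.mem_map.mp hf'
    exact Sum.inl_ne_inr (List.mem_singleton.mp hf)
  · exact hne (congrArg Sum.inr
      (Sum.inr_injective ((List.mem_singleton.mp hf).symm.trans (List.mem_singleton.mp hf'))))

end ImmersionModel

end Multigraph

open Multigraph in
/-- if `A` immerses into `B` with boundary mapped to boundary, then
every `(k,ℓ)`-bucket interface that `𝐁` conforms with is also conformed with by `𝐀`. -/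
theorem conforms_of_immersion
    (k ℓ : ℕ) (A B : Multigraph) (x : Fin k → A.V) (y : Fin k → B.V)
    (M : ImmersionModel A B) (hM : ∀ i : Fin k, M.vmap (x i) = y i)
    (I : BucketInterface k ℓ) (hB : Conforms B y ℓ I) :
    Conforms A x ℓ I := by
  obtain ⟨ρ, hρ, T, ⟨hT_range, hT_mono⟩, hodd, heven, hb, hb', hwidth, hwidth'⟩ := hB
  let φ : (A.extension x).V → (B.extension y).V := Sum.map M.vmap id
  refine ⟨ρ ∘ φ, hρ.comp (M.inj.sumMap Function.injective_id), T ∘ φ,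
    ⟨fun v => hT_range (φ v), fun u v => hT_mono (φ u) (φ v)⟩,
    fun v => hodd (M.vmap v), heven, fun i => (congrArg (T ∘ Sum.inl) (hM i)).trans (hb i),
    hb', ?_, ?_⟩
  · exact fun j hj =>
      (bucketWidth_comp_le M.vmap M.emap M.edgeDisj _ _ j).trans (hwidth j hj)
  · exact fun j hj =>
      (bucketWidth_comp_le φ (M.extensionWalk hM) (M.extensionWalk_edges_disjoint hM) ρ T j).trans
        (hwidth' j hj)
end
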